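/- Let E be an approval election with n voters and m candidates, let k be a committee size with k ≤ m, and let ℓ ∈ {1, …, k}. Let s be the smallest positive integer with s·k > m. Form the election E' by adding to E exactly s·k new candidates approved by no voter and (s−1)·n new voters who approve no candidates, and set the committee size to k' = s·k. Define f : {1,…,k'} → ℝ by f(i) = 0 for i < ℓ and f(i) = k' for i ≥ ℓ. Then E' has a size-k' committee with proportionality degree f if and only if E (with committee size k) has no ℓ-cohesive group. -/

import Mathlib

/-! Padding multiplies both the number of voters and the committee size by `s`, so the quota
`ℓ·n/k` is unchanged and a group of original voters is cohesive in the padded election exactly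
when it is cohesive in the original one. Dummy voters approve nothing, so a nonempty group with a
common candidate contains none of them. Hence an `ℓ`-cohesive group of `E` survives in `E'`, where
it would need average satisfaction `s·k > m`, which no original voter can reach. Conversely, if
`E` has no `ℓ`-cohesive group then `E'` has no `ℓ'`-cohesive group for `ℓ' ≥ ℓ`, and any
committee, e.g. the dummy candidates, meets the requirement `0` for `ℓ' < ℓ`. -/


/-- `X` is an `ℓ`-cohesive group in the approval election with voter type `V`,
candidate type `C`, approval function `A`, `n` voters and committee size `k`:
`|X| ≥ ℓ·n/k` and at least `ℓ` candidates are approved by every member of `X`. -/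
def IsCohesive {V C : Type*} [Fintype C] [DecidableEq C]
    (A : V → Finset C) (n k ℓ : ℕ) (X : Finset V) : Prop :=
  (ℓ : ℝ) * n / k ≤ X.card ∧
    ℓ ≤ (Finset.univ.filter (fun c : C => ∀ v ∈ X, c ∈ A v)).card

/-- The average satisfaction of the group of voters `X` with the committee `W`. -/
noncomputable def avgSat {V C : Type*} [DecidableEq C]
    (A : V → Finset C) (W : Finset C) (X : Finset V) : ℝ :=
  (∑ v ∈ X, ((A v ∩ W).card : ℝ)) / X.card


/-- The committee `W` has proportionality degree `f`: for every `ℓ ∈ {1,…,k}`,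
every `ℓ`-cohesive group has average satisfaction with `W` at least `f ℓ`. -/
def HasPD {V C : Type*} [Fintype C] [DecidableEq C]
    (A : V → Finset C) (n k : ℕ) (W : Finset C) (f : ℕ → ℝ) : Prop :=
  ∀ ℓ ∈ Finset.Icc 1 k, ∀ X : Finset V, IsCohesive A n k ℓ X → f ℓ ≤ avgSat A W X

open Finset Function

section Cohesion

variable {V C : Type*} [Fintype C] [DecidableEq C] {A : V → Finset C} {n k ℓ : ℕ} {X : Finset V}

def commonlyApproved (A : V → Finset C) (X : Finset V) : Finset C :=
  univ.filter fun c => ∀ v ∈ X, c ∈ A v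

theorem isCohesive_iff :
    IsCohesive A n k ℓ X ↔ (ℓ : ℝ) * n / k ≤ #X ∧ ℓ ≤ #(commonlyApproved A X) := Iff.rfl

theorem IsCohesive.mono {ℓ' : ℕ} (h : IsCohesive A n k ℓ X) (hℓ : ℓ' ≤ ℓ) :
    IsCohesive A n k ℓ' X :=
  ⟨le_trans (by gcongr) h.1, hℓ.trans h.2⟩

theorem isCohesive_mul_iff {s : ℕ} (hs : s ≠ 0) :
    IsCohesive A (s * n) (s * k) ℓ X ↔ IsCohesive A n k ℓ X := by
  have hs' : (s : ℝ) ≠ 0 := Nat.cast_ne_zero.mpr hs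
  have : (ℓ : ℝ) * ↑(s * n) / ↑(s * k) = ℓ * n / k := by
    push_cast
    rw [mul_left_comm, mul_div_mul_left _ _ hs']
  rw [isCohesive_iff, isCohesive_iff, this]

theorem IsCohesive.nonempty (h : IsCohesive A n k ℓ X) (hℓ : 0 < ℓ) (hn : 0 < n) (hk : 0 < k) :
    X.Nonempty := by
  rw [← card_pos, ← Nat.cast_pos (α := ℝ)]
  exact lt_of_lt_of_le (by positivity) h.1

theorem isCohesive_empty (hℓ : ℓ ≤ Fintype.card C) : IsCohesive A 0 k ℓ (∅ : Finset V) := by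
  simpa [isCohesive_iff, commonlyApproved] using hℓ

end Cohesion

section Satisfaction

variable {V C : Type*} [DecidableEq C] (A : V → Finset C) (W : Finset C) (X : Finset V)

theorem avgSat_nonneg : 0 ≤ avgSat A W X := by
  unfold avgSat
  positivity

theorem avgSat_le_of_forall_card_inter_le {b : ℕ} (h : ∀ v ∈ X, #(A v ∩ W) ≤ b) :
    avgSat A W X ≤ b := by
  unfold avgSat
  rcases X.eq_empty_or_nonempty with rfl | hX
  · simp
  rw [div_le_iff₀ (by exact_mod_cast hX.card_pos), mul_comm, ← nsmul_eq_mul]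
  exact sum_le_card_nsmul _ _ _ fun v hv => by exact_mod_cast h v hv

end Satisfaction

section Padding

variable {V D C E : Type*} (A : V → Finset C)

def pad : V ⊕ D → Finset (C ⊕ E) :=
  Sum.elim (fun v => (A v).map .inl) fun _ => ∅

@[simp]
theorem pad_inl (v : V) : pad (D := D) (E := E) A (.inl v) = (A v).map .inl := rfl

@[simp]
theorem pad_inr (w : D) : pad (E := E) A (.inr w) = ∅ := rfl

theorem card_pad_le [Fintype C] (x : V ⊕ D) : #(pad (E := E) A x) ≤ Fintype.card C := by
  cases x <;> simp [card_le_univ]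

variable [Fintype C] [DecidableEq C] [Fintype E] [DecidableEq E]

theorem map_inl_commonlyApproved_subset (X : Finset V) :
    (commonlyApproved A X).map .inl ⊆ commonlyApproved (pad (D := D) (E := E) A) (X.map .inl) := by
  intro c hc
  simp only [commonlyApproved, mem_map, mem_filter, mem_univ, true_and] at hc ⊢
  obtain ⟨c, hc, rfl⟩ := hc
  simpa using hc

theorem commonlyApproved_pad_map_inl {X : Finset V} (hX : X.Nonempty) :
    commonlyApproved (pad (D := D) (E := E) A) (X.map .inl) = (commonlyApproved A X).map .inl := by
  refine subset_antisymm (fun x hx => ?_) (map_inl_commonlyApproved_subset A X)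
  obtain ⟨v, hv⟩ := hX
  simp only [commonlyApproved, mem_map, mem_filter, mem_univ, true_and] at hx ⊢
  obtain ⟨c, -, rfl⟩ : ∃ c ∈ A v, Embedding.inl c = x := by simpa using hx _ ⟨v, hv, rfl⟩
  exact ⟨c, fun w hw => by simpa using hx _ ⟨w, hw, rfl⟩, rfl⟩

theorem map_toLeft_eq_of_commonlyApproved_pad_nonempty {X : Finset (V ⊕ D)}
    (h : (commonlyApproved (pad (E := E) A) X).Nonempty) : X.toLeft.map .inl = X := by
  refine subset_antisymm (map_inl_subset_iff_subset_toLeft.mpr subset_rfl)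
    (subset_map_inl.mpr ⟨subset_rfl, eq_empty_of_forall_notMem fun w hw => ?_⟩)
  obtain ⟨c, hc⟩ := h
  simpa using (mem_filter.mp hc).2 _ (mem_toRight.mp hw)

theorem IsCohesive.pad_map_inl {X : Finset V} {n k ℓ s : ℕ} (hs : s ≠ 0)
    (h : IsCohesive A n k ℓ X) :
    IsCohesive (pad (D := D) (E := E) A) (s * n) (s * k) ℓ (X.map .inl) := by
  rw [isCohesive_mul_iff hs, isCohesive_iff, card_map]
  refine ⟨h.1, h.2.trans ?_⟩
  rw [← card_map Embedding.inl]
  exact card_le_card (map_inl_commonlyApproved_subset A X)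

theorem IsCohesive.toLeft_of_pad {X : Finset (V ⊕ D)} {n k ℓ s : ℕ} (hs : s ≠ 0)
    (hX : X.Nonempty) (hℓ : 0 < ℓ) (h : IsCohesive (pad (E := E) A) (s * n) (s * k) ℓ X) :
    IsCohesive A n k ℓ X.toLeft := by
  rw [isCohesive_mul_iff hs] at h
  obtain ⟨Y, rfl⟩ : ∃ Y : Finset V, Y.map .inl = X :=
    ⟨_, map_toLeft_eq_of_commonlyApproved_pad_nonempty A (card_pos.mp (hℓ.trans_le h.2))⟩
  rw [isCohesive_iff, card_map, commonlyApproved_pad_map_inl A (map_nonempty.mp hX), card_map] at h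
  rwa [← disjSum_empty, toLeft_disjSum]

end Padding

theorem stmt12_general {V C : Type*} [Fintype V] [Fintype C] [DecidableEq C]
    (A : V → Finset C) (k ℓ s : ℕ) (hkm : k ≤ Fintype.card C)
    (hℓ1 : 1 ≤ ℓ) (hℓk : ℓ ≤ k)
    (hs : 0 < s ∧ Fintype.card C < s * k ∧ ∀ s' : ℕ, 0 < s' → Fintype.card C < s' * k → s ≤ s')
    (A' : V ⊕ Fin ((s - 1) * Fintype.card V) → Finset (C ⊕ Fin (s * k)))
    (hA'1 : ∀ v : V, A' (Sum.inl v) = (A v).map ⟨Sum.inl, Sum.inl_injective⟩)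
    (hA'2 : ∀ w, A' (Sum.inr w) = ∅) :
    (∃ W' : Finset (C ⊕ Fin (s * k)), W'.card = s * k ∧
        HasPD A' (s * Fintype.card V) (s * k) W'
          (fun i => if i < ℓ then 0 else ((s * k : ℕ) : ℝ))) ↔
      ¬ ∃ X : Finset V, IsCohesive A (Fintype.card V) k ℓ X := by
  obtain ⟨hs, hmsk, -⟩ := hs
  have hA' : A' = pad A := funext fun
    | .inl v => hA'1 v
    | .inr w => hA'2 w
  subst hA'
  constructor
  · rintro ⟨W', -, hPD⟩ ⟨X, hX⟩
    have hsat := hPD ℓ (mem_Icc.mpr ⟨hℓ1, hℓk.trans (Nat.le_mul_of_pos_left k hs)⟩) _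
      (hX.pad_map_inl A hs.ne')
    simp only [lt_irrefl, if_false] at hsat
    refine (hsat.trans (avgSat_le_of_forall_card_inter_le _ _ _ fun v _ =>
      (card_le_card inter_subset_left).trans (card_pad_le A v))).not_gt ?_
    exact_mod_cast hmsk
  · intro hnone
    have hn : 0 < Fintype.card V := by
      refine Nat.pos_of_ne_zero fun hn => hnone ⟨∅, ?_⟩
      rw [hn]
      exact isCohesive_empty (hℓk.trans hkm)
    refine ⟨univ.map .inr, by simp, fun ℓ' hℓ' X hX => ?_⟩
    dsimp only
    split_ifs with hlt
    · exact avgSat_nonneg ..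
    · have hℓ' : 0 < ℓ' := (mem_Icc.mp hℓ').1
      have hXne := hX.nonempty hℓ' (Nat.mul_pos hs hn) (Nat.mul_pos hs (by omega))
      exact absurd ⟨_, (hX.toLeft_of_pad A hs.ne' hXne hℓ').mono (not_lt.mp hlt)⟩ hnone

theorem stmt12 {V C : Type*} [Fintype V] [Fintype C] [DecidableEq V] [DecidableEq C]
    (A : V → Finset C) (k ℓ s : ℕ) (hk : 0 < k) (hkm : k ≤ Fintype.card C)
    (hℓ1 : 1 ≤ ℓ) (hℓk : ℓ ≤ k)
    (hs : 0 < s ∧ Fintype.card C < s * k ∧ ∀ s' : ℕ, 0 < s' → Fintype.card C < s' * k → s ≤ s')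
    (A' : V ⊕ Fin ((s - 1) * Fintype.card V) → Finset (C ⊕ Fin (s * k)))
    (hA'1 : ∀ v : V, A' (Sum.inl v) = (A v).map ⟨Sum.inl, Sum.inl_injective⟩)
    (hA'2 : ∀ w, A' (Sum.inr w) = ∅) :
    (∃ W' : Finset (C ⊕ Fin (s * k)), W'.card = s * k ∧
        HasPD A' (s * Fintype.card V) (s * k) W'
          (fun i => if i < ℓ then 0 else ((s * k : ℕ) : ℝ))) ↔
      ¬ ∃ X : Finset V, IsCohesive A (Fintype.card V) k ℓ X :=
  stmt12_general A k ℓ s hkm hℓ1 hℓk hs A' hA'1 hA'2
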